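/- arXiv:2005.04648 — 2 statements merged into one kernel-verified Lean document; each statement's English description precedes it below -/
import Mathlib

section
/- Fix n ≥ 1. The dyadic intervals I_α ⊂ (0,1] indexed by multi-indices of the form α = (0_{k_1}, 1, 0_{k_2}, 1, …, 1, 0_{k_{s-1}}, 1, 0_n) with s ≥ 1 and 0 ≤ k_1, …, k_{s-1} < n are pairwise disjoint. (For s = 1, α = 0_n.) -/
/-- The natural number `j` with binary digits `α`, so that `I_α = (j/2^k, (j+1)/2^k]`
with `k = |α|`. -/
def dyadicVal (α : List Bool) : ℕ :=
  α.foldl (fun acc b => 2 * acc + (if b then 1 else 0)) 0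

/-- The dyadic interval `I_α ⊆ (0,1]` indexed by a 0–1 multi-index `α`. -/
def dyadicInterval (α : List Bool) : Set ℝ :=
  Set.Ioc ((dyadicVal α : ℝ) / 2 ^ α.length) (((dyadicVal α : ℝ) + 1) / 2 ^ α.length)

/-- The multi-index `(0_{k_1}, 1, 0_{k_2}, 1, …, 1, 0_{k_{s-1}}, 1, 0_n)`
encoded by the list `ks = [k_1, …, k_{s-1}]` (empty list gives `0_n`). -/
def blockIndex (ks : List ℕ) (n : ℕ) : List Bool :=
  (ks.map fun k => List.replicate k false ++ [true]).flatten ++ List.replicate n false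

/-!
Dyadic intervals are nested or disjoint: `I_α` and `I_β` meet only if one of `α`, `β` is a
prefix of the other. An index `(0_{k_1}, 1, …, 1, 0_{k_{s-1}}, 1, 0_n)` with all `k_i < n`
is never a prefix of a different one: at the first block where they differ, the `1` closing
the shorter block of zeros faces a `0` of the other, since the final block `0_n` is longer
than every `0_{k_i}`.
-/

open List

theorem dyadicVal_eq_ofDigits (α : List Bool) :
    dyadicVal α = Nat.ofDigits 2 (α.reverse.map Bool.toNat) := by
  induction α using List.reverseRecOn with
  | nil => rfl
  | append_singleton α b ih =>
    rw [dyadicVal, foldl_append, ← dyadicVal, ih]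
    cases b <;> simp [Nat.ofDigits_cons, add_comm]

theorem toNat_lt_two_of_mem_map {l : List Bool} : ∀ d ∈ l.map Bool.toNat, d < 2 := by
  simp only [mem_map]
  rintro _ ⟨b, -, rfl⟩
  exact Bool.toNat_lt b

theorem dyadicVal_lt (α : List Bool) : dyadicVal α < 2 ^ α.length := by
  simpa [dyadicVal_eq_ofDigits] using
    Nat.ofDigits_lt_base_pow_length (l := α.reverse.map Bool.toNat) one_lt_two
      toNat_lt_two_of_mem_map

theorem dyadicVal_append (α γ : List Bool) :
    dyadicVal (α ++ γ) = dyadicVal α * 2 ^ γ.length + dyadicVal γ := by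
  simp only [dyadicVal_eq_ofDigits, reverse_append, map_append, Nat.ofDigits_append,
    length_map, length_reverse]
  ring

theorem eq_of_dyadicVal_eq {α β : List Bool} (hl : α.length = β.length)
    (h : dyadicVal α = dyadicVal β) : α = β := by
  rw [dyadicVal_eq_ofDigits, dyadicVal_eq_ofDigits] at h
  have := Nat.ofDigits_inj_of_len_eq one_lt_two (by simpa using hl) toNat_lt_two_of_mem_map
    toNat_lt_two_of_mem_map h
  have toNat_injective : Function.Injective Bool.toNat := by
    intro a b; cases a <;> cases b <;> simp
  exact reverse_injective (map_injective_iff.mpr toNat_injective this)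

theorem dyadicInterval_append_subset (α γ : List Bool) :
    dyadicInterval (α ++ γ) ⊆ dyadicInterval α := by
  have hγ := dyadicVal_lt γ
  simp only [dyadicInterval, dyadicVal_append, length_append, pow_add]
  apply Set.Ioc_subset_Ioc
  · rw [div_le_div_iff₀ (by positivity) (by positivity)]
    push_cast
    nlinarith [pow_pos (two_pos (α := ℝ)) α.length]
  · rw [div_le_div_iff₀ (by positivity) (by positivity)]
    have : (dyadicVal γ : ℝ) + 1 ≤ 2 ^ γ.length := by exact_mod_cast hγ
    push_cast
    nlinarith [pow_pos (two_pos (α := ℝ)) α.length]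

theorem eq_of_not_disjoint_dyadicInterval_of_length_eq {α β : List Bool}
    (hl : α.length = β.length) (h : ¬ Disjoint (dyadicInterval α) (dyadicInterval β)) :
    α = β := by
  obtain ⟨x, ⟨hαx, hxα⟩, ⟨hβx, hxβ⟩⟩ := Set.not_disjoint_iff.mp h
  have hpos : (0 : ℝ) < 2 ^ α.length := by positivity
  rw [← hl] at hβx hxβ
  have hαβ : dyadicVal α < dyadicVal β + 1 := by
    exact_mod_cast (div_lt_div_iff_of_pos_right hpos).mp (hαx.trans_le hxβ)
  have hβα : dyadicVal β < dyadicVal α + 1 := by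
    exact_mod_cast (div_lt_div_iff_of_pos_right hpos).mp (hβx.trans_le hxα)
  exact eq_of_dyadicVal_eq hl (by omega)

theorem prefix_or_prefix_of_not_disjoint_dyadicInterval {α β : List Bool}
    (h : ¬ Disjoint (dyadicInterval α) (dyadicInterval β)) : α <+: β ∨ β <+: α := by
  wlog hl : α.length ≤ β.length generalizing α β
  · exact (this (fun hd => h hd.symm) (le_of_not_ge hl)).symm
  left
  have hsub : dyadicInterval β ⊆ dyadicInterval (β.take α.length) := by
    conv_lhs => rw [← take_append_drop α.length β]
    exact dyadicInterval_append_subset _ _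
  have htake : β.take α.length = α :=
    (eq_of_not_disjoint_dyadicInterval_of_length_eq (by simp [hl])
      fun hd => h (hd.mono_right hsub)).symm
  exact htake ▸ take_prefix _ _

theorem replicate_append_true_cons_not_prefix {k m : ℕ} (h : k < m) (A L : List Bool) :
    ¬ (replicate k false ++ true :: A <+: replicate m false ++ L) ∧
      ¬ (replicate m false ++ L <+: replicate k false ++ true :: A) := by
  obtain ⟨d, rfl⟩ := Nat.exists_eq_add_of_lt h
  rw [add_assoc, replicate_add, replicate_succ, append_assoc, cons_append]
  simp only [prefix_append_right_inj, cons_prefix_cons, Bool.true_eq_false, Bool.false_eq_true,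
    false_and, not_false_eq_true, and_self]

@[simp]
theorem blockIndex_nil (n : ℕ) : blockIndex [] n = replicate n false := by
  simp [blockIndex]

@[simp]
theorem blockIndex_cons (k : ℕ) (ks : List ℕ) (n : ℕ) :
    blockIndex (k :: ks) n = replicate k false ++ true :: blockIndex ks n := by
  simp [blockIndex]

theorem eq_of_blockIndex_prefix {n : ℕ} {ks ks' : List ℕ} (hks : ∀ k ∈ ks, k < n)
    (hks' : ∀ k ∈ ks', k < n) (h : blockIndex ks n <+: blockIndex ks' n) : ks = ks' := by
  induction ks generalizing ks' with
  | nil =>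
    cases ks' with
    | nil => rfl
    | cons k' ks' =>
      exact absurd (by simpa using h)
        (replicate_append_true_cons_not_prefix (hks' k' mem_cons_self) _ []).2
  | cons k ks ih =>
    obtain ⟨hk, hks⟩ := forall_mem_cons.mp hks
    cases ks' with
    | nil => exact absurd (by simpa using h) (replicate_append_true_cons_not_prefix hk _ []).1
    | cons k' ks' =>
      rw [blockIndex_cons, blockIndex_cons] at h
      rcases lt_trichotomy k k' with hlt | rfl | hgt
      · exact absurd h (replicate_append_true_cons_not_prefix hlt _ _).1
      · rw [prefix_append_right_inj, cons_prefix_cons] at h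
        exact congrArg (k :: ·) (ih hks (forall_mem_cons.mp hks').2 h.2)
      · exact absurd h (replicate_append_true_cons_not_prefix hgt _ _).2

theorem stmt5_general (n : ℕ) (ks ks' : List ℕ)
    (hks : ∀ k ∈ ks, k < n) (hks' : ∀ k ∈ ks', k < n) (hne : ks ≠ ks') :
    Disjoint (dyadicInterval (blockIndex ks n)) (dyadicInterval (blockIndex ks' n)) := by
  by_contra h
  rcases prefix_or_prefix_of_not_disjoint_dyadicInterval h with hp | hp
  · exact hne (eq_of_blockIndex_prefix hks hks' hp)
  · exact hne (eq_of_blockIndex_prefix hks' hks hp).symm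

/-- for fixed `n ≥ 1`, the dyadic intervals indexed by multi-indices of
the form `(0_{k_1},1,…,1,0_{k_{s-1}},1,0_n)` with all `k_i < n` are pairwise disjoint. -/
theorem stmt5 (n : ℕ) (hn : 1 ≤ n) (ks ks' : List ℕ)
    (hks : ∀ k ∈ ks, k < n) (hks' : ∀ k ∈ ks', k < n) (hne : ks ≠ ks') :
    Disjoint (dyadicInterval (blockIndex ks n)) (dyadicInterval (blockIndex ks' n)) :=
  stmt5_general n ks ks' hks hks' hne
end

section
/- For a first-order Haar chaos f with coefficients (c_k), one has Σ_{k≥0} |f(1/2^k) - f(1/2^{k+1})| = Σ_{k≥0} |2c_k - c_{k+1}|, and this quantity is equivalent (with absolute constants) to Σ_{k≥0} |c_k|: specifically Σ_k |2c_k - c_{k+1}| ≤ 3 Σ_k |c_k|, and conversely Σ_k |c_k| ≲ Σ_k |2c_k - c_{k+1}| whenever the latter is finite and c_k → 0. -/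
open scoped ENNReal
open Finset Filter Topology

/-!
The variation identity holds termwise, since `f(1/2^k) - f(1/2^{k+1}) = -(2c_k - c_{k+1})`, and the
bound by `3 Σ ‖c_k‖` is the triangle inequality. Conversely, `2‖c_k‖ ≤ ‖2c_k - c_{k+1}‖ + ‖c_{k+1}‖`
telescopes to `Σ_{k<n} ‖c_k‖ ≤ Σ_{k<n} ‖2c_k - c_{k+1}‖ + ‖c_n‖`, and `c_n → 0` lets `n → ∞`
with constant `C = 1`.
-/

/-- The value `f(1/2^k)` of the first-order Haar chaos `f = Σ c_k h_{2^k}`. -/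
def haarChaosValue {R : Type*} [Ring R] (c : ℕ → R) (k : ℕ) : R :=
  -c k + ∑ j ∈ range k, c j

lemma haarChaosValue_sub_succ {R : Type*} [Ring R] (c : ℕ → R) (k : ℕ) :
    haarChaosValue c k - haarChaosValue c (k + 1) = -(2 * c k - c (k + 1)) := by
  rw [haarChaosValue, haarChaosValue, sum_range_succ, two_mul]
  abel

section NormedRing

variable {R : Type*} [NormedRing R] (c : ℕ → R)

lemma enorm_haarChaosValue_sub_succ (k : ℕ) :
    ‖haarChaosValue c k - haarChaosValue c (k + 1)‖ₑ = ‖2 * c k - c (k + 1)‖ₑ := by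
  rw [haarChaosValue_sub_succ, enorm_neg]

lemma tsum_enorm_two_mul_sub_le :
    ∑' k, ‖2 * c k - c (k + 1)‖ₑ ≤ 3 * ∑' k, ‖c k‖ₑ :=
  calc ∑' k, ‖2 * c k - c (k + 1)‖ₑ
      ≤ ∑' k, (2 * ‖c k‖ₑ + ‖c (k + 1)‖ₑ) := by
        refine ENNReal.tsum_le_tsum fun k => enorm_sub_le.trans ?_
        rw [two_mul, two_mul]
        exact add_le_add (enorm_add_le _ _) le_rfl
    _ = 2 * ∑' k, ‖c k‖ₑ + ∑' k, ‖c (k + 1)‖ₑ := by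
        rw [ENNReal.tsum_add, ENNReal.tsum_mul_left]
    _ ≤ 2 * ∑' k, ‖c k‖ₑ + ∑' k, ‖c k‖ₑ :=
        add_le_add le_rfl (ENNReal.tsum_comp_le_tsum_of_injective (add_left_injective 1) _)
    _ = 3 * ∑' k, ‖c k‖ₑ := by ring

end NormedRing

section RCLike

variable {𝕜 : Type*} [RCLike 𝕜] (c : ℕ → 𝕜)

lemma two_mul_enorm_le_enorm_two_mul_sub_add (x y : 𝕜) :
    2 * ‖x‖ₑ ≤ ‖2 * x - y‖ₑ + ‖y‖ₑ := by
  calc 2 * ‖x‖ₑ = ‖2 * x - y + y‖ₑ := by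
        rw [sub_add_cancel, enorm_mul, ← ofReal_norm (2 : 𝕜), RCLike.norm_two, ENNReal.ofReal_ofNat]
    _ ≤ ‖2 * x - y‖ₑ + ‖y‖ₑ := enorm_add_le _ _

lemma sum_range_enorm_le_sum_range_enorm_two_mul_sub_add (n : ℕ) :
    ∑ k ∈ range n, ‖c k‖ₑ ≤ ∑ k ∈ range n, ‖2 * c k - c (k + 1)‖ₑ + ‖c n‖ₑ := by
  induction n with
  | zero => simp
  | succ n ih =>
    calc ∑ k ∈ range (n + 1), ‖c k‖ₑ ≤ ∑ k ∈ range n, ‖2 * c k - c (k + 1)‖ₑ + 2 * ‖c n‖ₑ := by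
          rw [sum_range_succ, two_mul, ← add_assoc]
          gcongr
      _ ≤ ∑ k ∈ range (n + 1), ‖2 * c k - c (k + 1)‖ₑ + ‖c (n + 1)‖ₑ := by
          rw [sum_range_succ, add_assoc]
          gcongr
          exact two_mul_enorm_le_enorm_two_mul_sub_add _ _

lemma tsum_enorm_le_tsum_enorm_two_mul_sub (hc : Tendsto c atTop (𝓝 0)) :
    ∑' k, ‖c k‖ₑ ≤ ∑' k, ‖2 * c k - c (k + 1)‖ₑ := by
  refine ENNReal.tsum_le_of_sum_range_le fun m => ?_
  have h_lim : Tendsto (fun n => ∑' k, ‖2 * c k - c (k + 1)‖ₑ + ‖c n‖ₑ) atTop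
      (𝓝 (∑' k, ‖2 * c k - c (k + 1)‖ₑ)) := by
    simpa using tendsto_const_nhds.add hc.enorm
  refine ge_of_tendsto h_lim (eventually_atTop.2 ⟨m, fun n hmn => ?_⟩)
  calc ∑ k ∈ range m, ‖c k‖ₑ ≤ ∑ k ∈ range n, ‖c k‖ₑ :=
        sum_le_sum_of_subset (range_subset_range.2 hmn)
    _ ≤ ∑ k ∈ range n, ‖2 * c k - c (k + 1)‖ₑ + ‖c n‖ₑ :=
        sum_range_enorm_le_sum_range_enorm_two_mul_sub_add c n
    _ ≤ ∑' k, ‖2 * c k - c (k + 1)‖ₑ + ‖c n‖ₑ := by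
        gcongr
        exact ENNReal.sum_le_tsum _

end RCLike

/-- for a first-order Haar chaos with coefficients `c` and values
`f(1/2^k) = -c_k + Σ_{j<k} c_j`, the variation sum `Σ_k |f(1/2^k) - f(1/2^{k+1})|`
equals `Σ_k |2c_k - c_{k+1}|`; moreover `Σ_k |2c_k - c_{k+1}| ≤ 3 Σ_k |c_k|` and,
with a uniform finite constant `C`, `Σ_k |c_k| ≤ C Σ_k |2c_k - c_{k+1}|` whenever
`c_k → 0` (sums taken in `ℝ≥0∞`, so finiteness of the right-hand side is implicit). -/
theorem stmt11 :
    ∃ C : ℝ≥0∞, 0 < C ∧ C < ⊤ ∧ ∀ c : ℕ → ℂ,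
      (∑' k : ℕ, (‖(-c k + ∑ j ∈ Finset.range k, c j)
          - (-c (k+1) + ∑ j ∈ Finset.range (k+1), c j)‖₊ : ℝ≥0∞))
        = (∑' k : ℕ, (‖2 * c k - c (k+1)‖₊ : ℝ≥0∞)) ∧
      (∑' k : ℕ, (‖2 * c k - c (k+1)‖₊ : ℝ≥0∞)) ≤ 3 * ∑' k : ℕ, (‖c k‖₊ : ℝ≥0∞) ∧
      (Filter.Tendsto c Filter.atTop (nhds 0) →
        (∑' k : ℕ, (‖c k‖₊ : ℝ≥0∞)) ≤ C * ∑' k : ℕ, (‖2 * c k - c (k+1)‖₊ : ℝ≥0∞)) := by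
  refine ⟨1, one_pos, ENNReal.one_lt_top, fun c => ⟨?_, ?_, fun hc => ?_⟩⟩
  · exact tsum_congr (enorm_haarChaosValue_sub_succ c)
  · exact tsum_enorm_two_mul_sub_le c
  · rw [one_mul]
    exact tsum_enorm_le_tsum_enorm_two_mul_sub c hc
end
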